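/- Let D be a real m×m diagonal matrix with strictly positive diagonal entries, C a real m×q matrix, z₀ ∈ ℝᵐ, H = D⁻¹C, z(λ) = z₀ + Hλ, and g(λ) = Cᵀ·arcsin(z(λ)). Let λ̲ ≤ λ̄ componentwise in ℝ^q and Λ = {λ : λ̲ ≤ λ ≤ λ̄}. Assume: (1) |z_e(λ)| ≤ 1 for every e ∈ {1,…,m} and every λ ∈ Λ; (2) for all λ, μ ∈ Λ with λ ≤ μ componentwise, g(λ) ≤ g(μ) componentwise; (3) for every i ∈ {1,…,q}, g_i evaluated at the point whose i-th coordinate is λ̲_i and whose j-th coordinate is λ̄_j for all j ≠ i is ≤ 0, and g_i evaluated at the point whose i-th coordinate is λ̄_i and whose j-th coordinate is λ̲_j for all j ≠ i is ≥ 0. Then there exists λ* ∈ Λ such that g(λ*) = 0. -/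

import Mathlib

open Matrix Real Set Filter Topology Function

/-!
The residual `g` is the gradient of the convex potential `Φ(λ) = ∑ₑ dₑ F(zₑ(λ))`, where
`F(x) = x arcsin x + √(1 - x²)` has `F' = arcsin` on `(-1, 1)`; this uses `Cᵀ = Hᵀ D`.
Since `F b - F a = ∫ₐᵇ arcsin` and `arcsin` is monotone, the subgradient inequality
`⟪g λ, μ - λ⟫ ≤ Φ μ - Φ λ` holds on the whole box, also where `|zₑ| = 1`.
At a minimiser `λ*` of `Φ` on the compact box, moving one coordinate into the box shows
`gᵢ(λ*) ≥ 0` if `λ*ᵢ < λ̄ᵢ` and `gᵢ(λ*) ≤ 0` if `λ̲ᵢ < λ*ᵢ`. On the faces the missing sign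
comes from monotonicity and the corner conditions, so `g(λ*) = 0` without Poincaré–Miranda.
-/

theorem Monotone.mul_sub_le_intervalIntegral {f : ℝ → ℝ} (hf : Monotone f) (hc : Continuous f)
    (a b : ℝ) : f a * (b - a) ≤ ∫ t in a..b, f t := by
  rcases le_total a b with hab | hba
  · calc f a * (b - a) = ∫ _ in a..b, f a := by simp [mul_comm]
      _ ≤ ∫ t in a..b, f t :=
        intervalIntegral.integral_mono_on hab intervalIntegrable_const
          (hc.intervalIntegrable a b) fun t ht => hf ht.1
  · have : ∫ t in b..a, f t ≤ ∫ _ in b..a, f a :=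
      intervalIntegral.integral_mono_on hba (hc.intervalIntegrable b a) intervalIntegrable_const
        fun t ht => hf ht.2
    rw [intervalIntegral.integral_const, smul_eq_mul] at this
    rw [intervalIntegral.integral_symm b a]
    linarith

noncomputable def arcsinPotential (x : ℝ) : ℝ := x * arcsin x + √(1 - x ^ 2)

@[fun_prop]
theorem continuous_arcsinPotential : Continuous arcsinPotential := by
  unfold arcsinPotential
  fun_prop

theorem hasDerivAt_arcsinPotential {x : ℝ} (hx : x ∈ Ioo (-1) 1) :
    HasDerivAt arcsinPotential (arcsin x) x := by
  have hpos : 0 < 1 - x ^ 2 := by nlinarith [hx.1, hx.2]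
  have hsqrt := ((hasDerivAt_pow 2 x).const_sub 1).sqrt hpos.ne'
  refine (((hasDerivAt_id' x).mul (hasDerivAt_arcsin hx.1.ne' hx.2.ne)).add hsqrt).congr_deriv ?_
  field_simp
  ring

theorem arcsinPotential_sub_eq_integral {a b : ℝ} (ha : a ∈ Icc (-1) 1)
    (hb : b ∈ Icc (-1) 1) : arcsinPotential b - arcsinPotential a = ∫ t in a..b, arcsin t := by
  wlog hab : a ≤ b generalizing a b
  · rw [intervalIntegral.integral_symm, ← this hb ha (le_of_not_ge hab)]
    ring
  refine (intervalIntegral.integral_eq_sub_of_hasDerivAt_of_le hab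
    continuous_arcsinPotential.continuousOn (fun x hx => hasDerivAt_arcsinPotential ?_)
    (continuous_arcsin.intervalIntegrable a b)).symm
  exact ⟨ha.1.trans_lt hx.1, hx.2.trans_le hb.2⟩

theorem arcsin_mul_sub_le_arcsinPotential_sub {a b : ℝ} (ha : a ∈ Icc (-1) 1)
    (hb : b ∈ Icc (-1) 1) : arcsin a * (b - a) ≤ arcsinPotential b - arcsinPotential a := by
  rw [arcsinPotential_sub_eq_integral ha hb]
  exact monotone_arcsin.mul_sub_le_intervalIntegral continuous_arcsin a b

section Box

variable {ι : Type*} [DecidableEq ι] {l u x : ι → ℝ} {i : ι}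

theorem update_mem_Icc (hx : x ∈ Icc l u) {t : ℝ} (ht : t ∈ Icc (l i) (u i)) :
    update x i t ∈ Icc l u :=
  ⟨le_update_iff.2 ⟨ht.1, fun j _ => hx.1 j⟩, update_le_iff.2 ⟨ht.2, fun j _ => hx.2 j⟩⟩

variable {g : (ι → ℝ) → ι → ℝ}

theorem tendsto_apply_update (hg : Continuous g) (x : ι → ℝ) (i : ι) :
    Tendsto (fun t => g (update x i t) i) (𝓝 (x i)) (𝓝 (g x i)) := by
  have hc : Continuous fun t => g (update x i t) i :=
    (continuous_apply i).comp (hg.comp (continuous_const.update i continuous_id))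
  simpa using hc.tendsto (x i)

theorem apply_nonpos_of_apply_eq_lower (hmono : MonotoneOn g (Icc l u)) (hlu : l ≤ u)
    (hcorner : g (update u i (l i)) i ≤ 0) (hx : x ∈ Icc l u) (hxi : x i = l i) : g x i ≤ 0 :=
  (hmono hx (update_mem_Icc ⟨hlu, le_rfl⟩ ⟨le_rfl, hlu i⟩)
    (le_update_iff.2 ⟨hxi.le, fun j _ => hx.2 j⟩) i).trans hcorner

theorem apply_nonneg_of_apply_eq_upper (hmono : MonotoneOn g (Icc l u)) (hlu : l ≤ u)
    (hcorner : 0 ≤ g (update l i (u i)) i) (hx : x ∈ Icc l u) (hxi : x i = u i) : 0 ≤ g x i :=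
  hcorner.trans (hmono (update_mem_Icc ⟨le_rfl, hlu⟩ ⟨hlu i, le_rfl⟩) hx
    (update_le_iff.2 ⟨hxi.ge, fun j _ => hx.1 j⟩) i)

variable [Fintype ι] {Φ : (ι → ℝ) → ℝ}

def IsSubgradientOn (Φ : (ι → ℝ) → ℝ) (g : (ι → ℝ) → ι → ℝ) (s : Set (ι → ℝ)) : Prop :=
  ∀ y ∈ s, ∀ y' ∈ s, g y ⬝ᵥ (y' - y) ≤ Φ y' - Φ y

theorem dotProduct_sub_update (v x : ι → ℝ) (i : ι) (t : ℝ) :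
    v ⬝ᵥ (x - update x i t) = v i * (x i - t) := by
  have : x - update x i t = Pi.single i (x i - t) := by
    ext j
    by_cases hj : j = i <;> simp [hj]
  rw [this, dotProduct_single]

theorem apply_update_mul_sub_nonpos
    (hsub : IsSubgradientOn Φ g (Icc l u))
    (hmin : IsMinOn Φ (Icc l u) x) (hx : x ∈ Icc l u) {t : ℝ} (ht : t ∈ Icc (l i) (u i)) :
    g (update x i t) i * (x i - t) ≤ 0 := by
  have hy := update_mem_Icc hx ht
  rw [← dotProduct_sub_update]
  linarith [hsub _ hy x hx, isMinOn_iff.1 hmin _ hy]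

theorem apply_nonneg_of_lt_upper
    (hsub : IsSubgradientOn Φ g (Icc l u)) (hg : Continuous g)
    (hmin : IsMinOn Φ (Icc l u) x) (hx : x ∈ Icc l u) (hxi : x i < u i) : 0 ≤ g x i := by
  refine ge_of_tendsto
    ((tendsto_apply_update hg x i).mono_left (nhdsWithin_le_nhds (s := Ioi (x i)))) ?_
  filter_upwards [Ioc_mem_nhdsGT hxi] with t ht
  have := apply_update_mul_sub_nonpos hsub hmin hx ⟨(hx.1 i).trans ht.1.le, ht.2⟩
  nlinarith [ht.1]

theorem apply_nonpos_of_lower_lt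
    (hsub : IsSubgradientOn Φ g (Icc l u)) (hg : Continuous g)
    (hmin : IsMinOn Φ (Icc l u) x) (hx : x ∈ Icc l u) (hxi : l i < x i) : g x i ≤ 0 := by
  refine le_of_tendsto
    ((tendsto_apply_update hg x i).mono_left (nhdsWithin_le_nhds (s := Iio (x i)))) ?_
  filter_upwards [Ico_mem_nhdsLT hxi] with t ht
  have := apply_update_mul_sub_nonpos hsub hmin hx ⟨ht.1, ht.2.le.trans (hx.2 i)⟩
  nlinarith [ht.2]

theorem exists_mem_Icc_eq_zero_of_subgradient_of_monotoneOn (hlu : l ≤ u)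
    (hΦ : ContinuousOn Φ (Icc l u)) (hg : Continuous g)
    (hsub : IsSubgradientOn Φ g (Icc l u))
    (hmono : MonotoneOn g (Icc l u)) (hlower : ∀ i, g (update u i (l i)) i ≤ 0)
    (hupper : ∀ i, 0 ≤ g (update l i (u i)) i) : ∃ x ∈ Icc l u, g x = 0 := by
  obtain ⟨x, hx, hmin⟩ := isCompact_Icc.exists_isMinOn (nonempty_Icc.2 hlu) hΦ
  refine ⟨x, hx, funext fun i => le_antisymm ?_ ?_⟩
  · rcases (hx.1 i).eq_or_lt with hxi | hxi
    · exact apply_nonpos_of_apply_eq_lower hmono hlu (hlower i) hx hxi.symm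
    · exact apply_nonpos_of_lower_lt hsub hg hmin hx hxi
  · rcases (hx.2 i).lt_or_eq with hxi | hxi
    · exact apply_nonneg_of_lt_upper hsub hg hmin hx hxi
    · exact apply_nonneg_of_apply_eq_upper hmono hlu (hupper i) hx hxi

end Box

theorem transpose_mulVec_dotProduct_diagonal_mul {R κ ι : Type*} [CommRing R] [Fintype κ]
    [DecidableEq κ] [Fintype ι] (d : κ → R) (H : Matrix κ ι R) (a : κ → R) (v : ι → R) :
    (diagonal d * H)ᵀ *ᵥ a ⬝ᵥ v = ∑ e, d e * (a e * (H *ᵥ v) e) := by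
  rw [mulVec_transpose, ← dotProduct_mulVec, ← mulVec_mulVec, dotProduct]
  simp only [mulVec_diagonal]
  exact Finset.sum_congr rfl fun e _ => by ring

/-- Core conclusion in the proof of Theorem 1: under edge-wise
feasibility, coordinatewise monotonicity of the cycle consistency residual `g`,
and corner sign conditions, `g` has a zero in the box `Λ`. -/
theorem stmt6 {m q : ℕ}
    (d : Fin m → ℝ) (hd : ∀ e, 0 < d e)
    (D : Matrix (Fin m) (Fin m) ℝ) (hD : D = Matrix.diagonal d)
    (C : Matrix (Fin m) (Fin q) ℝ)
    (z0 : Fin m → ℝ)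
    (H : Matrix (Fin m) (Fin q) ℝ) (hH : H = D⁻¹ * C)
    (z : (Fin q → ℝ) → Fin m → ℝ) (hz : ∀ lam, z lam = z0 + H.mulVec lam)
    (g : (Fin q → ℝ) → Fin q → ℝ)
    (hg : ∀ lam, g lam = Cᵀ.mulVec (fun e => Real.arcsin (z lam e)))
    (lamL lamU : Fin q → ℝ) (hle : lamL ≤ lamU)
    (Lam : Set (Fin q → ℝ)) (hLam : Lam = {lam | lamL ≤ lam ∧ lam ≤ lamU})
    (h1 : ∀ lam ∈ Lam, ∀ e, |z lam e| ≤ 1)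
    (h2 : ∀ lam ∈ Lam, ∀ mu ∈ Lam, lam ≤ mu → g lam ≤ g mu)
    (h3 : ∀ i : Fin q,
      g (fun j => if j = i then lamL i else lamU j) i ≤ 0 ∧
      0 ≤ g (fun j => if j = i then lamU i else lamL j) i) :
    ∃ lamStar ∈ Lam, g lamStar = 0 := by
  have hdet : IsUnit (diagonal d).det := by
    rw [det_diagonal]
    exact (Finset.prod_pos fun e _ => hd e).ne'.isUnit
  have hC : C = diagonal d * H := by
    rw [hH, hD, ← Matrix.mul_assoc, mul_nonsing_inv _ hdet, Matrix.one_mul]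
  subst hLam
  have hzc : Continuous z := by
    rw [funext hz]
    fun_prop
  have hgc : Continuous g := by
    rw [funext hg]
    fun_prop
  let Φ : (Fin q → ℝ) → ℝ := fun lam => ∑ e, d e * arcsinPotential (z lam e)
  have hsub : IsSubgradientOn Φ g (Icc lamL lamU) := by
    intro x hx y hy
    have hdz : H *ᵥ (y - x) = z y - z x := by
      rw [mulVec_sub, hz, hz]
      abel
    rw [hg, hC, transpose_mulVec_dotProduct_diagonal_mul, hdz, ← Finset.sum_sub_distrib]
    refine Finset.sum_le_sum fun e _ => ?_
    rw [← mul_sub]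
    exact mul_le_mul_of_nonneg_left (arcsin_mul_sub_le_arcsinPotential_sub
      (abs_le.1 (h1 x hx e)) (abs_le.1 (h1 y hy e))) (hd e).le
  exact exists_mem_Icc_eq_zero_of_subgradient_of_monotoneOn hle
    (Continuous.continuousOn (by fun_prop)) hgc hsub h2
    (fun i => by simpa only [← update_apply] using (h3 i).1)
    (fun i => by simpa only [← update_apply] using (h3 i).2)
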